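/- Let m ≥ 1 and q₀ ≥ 1 be integers, let L_1, …, L_{q₀} be pairwise disjoint finite subsets of ℤ \ {0}, each of cardinality at most 2m, and let (Υ_ℓ)_{ℓ ∈ {0} ∪ L_1 ∪ … ∪ L_{q₀}} be independent standard Gaussian random variables. Let 0 < d̲ ≤ d̄ and set κ = d̄ / d̲. Then P( Υ_0 > 0 and there exists q ∈ {1, …, q₀} with d̄ Υ_0 − d̲ Υ_ℓ ≤ 0 for all ℓ ∈ L_q ) ≥ 1/2 − ∫_0^∞ (1 − Φ̄(κx)^{2m})^{q₀} · e^{-x²/2} / √(2π) dx, where Φ̄(y) = ∫_y^∞ e^{-u²/2} du / √(2π) is the standard Gaussian tail function. -/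

import Mathlib

set_option maxHeartbeats 1000000


open MeasureTheory ProbabilityTheory

/-- The standard Gaussian tail function `Φ̄(y) = ∫_y^∞ e^{-u²/2}/√(2π) du`. -/
noncomputable def Phibar (y : ℝ) : ℝ :=
  ∫ u in Set.Ioi y, Real.exp (-u ^ 2 / 2) / Real.sqrt (2 * Real.pi)


lemma integrable_phi : MeasureTheory.Integrable (fun u : ℝ => Real.exp (-u ^ 2 / 2) / Real.sqrt (2 * Real.pi)) := by
  have h : MeasureTheory.Integrable (fun u : ℝ => Real.exp (-(1/2) * u ^ 2)) :=
    integrable_exp_neg_mul_sq (by norm_num)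
  have h2 : (fun u : ℝ => Real.exp (-u ^ 2 / 2)) = fun u : ℝ => Real.exp (-(1/2) * u ^ 2) := by
    funext u; ring_nf
  exact ((h2 ▸ h)).div_const _

lemma phibar_nonneg (y : ℝ) : 0 ≤ Phibar y := by
  apply MeasureTheory.setIntegral_nonneg measurableSet_Ioi
  intro u _
  positivity

lemma phibar_anti : Antitone Phibar := by
  intro y y' h
  apply MeasureTheory.setIntegral_mono_set integrable_phi.integrableOn
  · filter_upwards with u; positivity
  · exact HasSubset.Subset.eventuallyLE (Set.Ioi_subset_Ioi h)

lemma pdf_eq (x : ℝ) : gaussianPDFReal 0 1 x = Real.exp (-x ^ 2 / 2) / Real.sqrt (2 * Real.pi) := by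
  simp [gaussianPDFReal]
  rw [inv_mul_eq_div]
  ring_nf

lemma gaussian_Ici (y : ℝ) : gaussianReal 0 1 (Set.Ici y) = ENNReal.ofReal (Phibar y) := by
  rw [gaussianReal_apply_eq_integral 0 one_ne_zero]
  congr 1
  rw [MeasureTheory.integral_Ici_eq_integral_Ioi]
  exact MeasureTheory.setIntegral_congr_fun measurableSet_Ioi (fun x _ => pdf_eq x)

lemma gaussian_Ioi (y : ℝ) : gaussianReal 0 1 (Set.Ioi y) = ENNReal.ofReal (Phibar y) := by
  rw [gaussianReal_apply_eq_integral 0 one_ne_zero]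
  congr 1
  exact MeasureTheory.setIntegral_congr_fun measurableSet_Ioi (fun x _ => pdf_eq x)

lemma phibar_le_one (y : ℝ) : Phibar y ≤ 1 := by
  have := gaussian_Ici y
  have h2 : gaussianReal 0 1 (Set.Ici y) ≤ 1 := prob_le_one
  rw [this] at h2
  exact ENNReal.ofReal_le_one.mp h2

lemma phibar_zero : Phibar 0 = 1/2 := by
  unfold Phibar
  rw [MeasureTheory.integral_div]
  have h2 : (fun u : ℝ => Real.exp (-u ^ 2 / 2)) = fun u : ℝ => Real.exp (-(1/2) * u ^ 2) := by
    funext u; ring_nf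
  rw [h2, integral_gaussian_Ioi]
  rw [show Real.pi / (1/2) = 2 * Real.pi by ring]
  rw [div_div, div_eq_iff (by positivity)]
  ring

theorem stmt17 {Ω : Type*} [MeasurableSpace Ω] (P : Measure Ω) [IsProbabilityMeasure P]
    (m q₀ : ℕ) (hm : 1 ≤ m) (hq₀ : 1 ≤ q₀)
    (L : Fin q₀ → Finset ℤ)
    (hdisj : ∀ q q' : Fin q₀, q ≠ q' → Disjoint (L q) (L q'))
    (h0 : ∀ q, (0 : ℤ) ∉ L q)
    (hcard : ∀ q, (L q).card ≤ 2 * m)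
    (Υ : ℤ → Ω → ℝ) (hΥmeas : ∀ i, Measurable (Υ i))
    (S : Set ℤ) (hS : S = {0} ∪ ⋃ q : Fin q₀, (L q : Set ℤ))
    (hindep : iIndepFun
      (fun i : S => Υ i) P)
    (hgauss : ∀ i ∈ S, Measure.map (Υ i) P = gaussianReal 0 1)
    (dlo dhi : ℝ) (hdlo : 0 < dlo) (hd : dlo ≤ dhi) :
    ENNReal.ofReal
        (1 / 2 - ∫ x in Set.Ioi (0 : ℝ),
          (1 - Phibar ((dhi / dlo) * x) ^ (2 * m)) ^ q₀ *
            (Real.exp (-x ^ 2 / 2) / Real.sqrt (2 * Real.pi)))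
      ≤ P {ω | 0 < Υ 0 ω ∧
          ∃ q : Fin q₀, ∀ l ∈ L q, dhi * Υ 0 ω - dlo * Υ l ω ≤ 0} := by
  classical
  set κ : ℝ := dhi / dlo with hκ
  -- membership facts
  have h0S : (0:ℤ) ∈ S := by rw [hS]; exact Or.inl rfl
  have hLS : ∀ {q : Fin q₀} {ℓ : ℤ}, ℓ ∈ L q → ℓ ∈ S := by
    intro q ℓ h; rw [hS]; exact Or.inr (Set.mem_iUnion.mpr ⟨q, h⟩)
  have hSfin : S.Finite := by
    rw [hS]
    exact (Set.finite_singleton 0).union (Set.finite_iUnion fun q => (L q).finite_toSet)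
  haveI : Fintype ↥S := hSfin.fintype
  -- the index finset
  set Lbar : Finset ℤ := Finset.univ.biUnion L with hLbar
  have hmemLbar : ∀ {ℓ : ℤ}, ℓ ∈ Lbar ↔ ∃ q, ℓ ∈ L q := by
    intro ℓ; simp [hLbar]
  have hLbarS : ∀ {ℓ : ℤ}, ℓ ∈ Lbar → ℓ ∈ S := by
    intro ℓ h; obtain ⟨q, hq⟩ := hmemLbar.mp h; exact hLS hq
  have hLbar0 : ∀ {ℓ : ℤ}, ℓ ∈ Lbar → ℓ ≠ 0 := by
    intro ℓ h; obtain ⟨q, hq⟩ := hmemLbar.mp h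
    intro h0'; exact h0 q (h0' ▸ hq)
  set X : Ω → ℝ := Υ 0 with hX
  set Z : Ω → (↥Lbar → ℝ) := fun ω ℓ => Υ ℓ.val ω with hZdef
  have hXm : Measurable X := hΥmeas 0
  have hZm : Measurable Z := measurable_pi_lambda _ fun ℓ => hΥmeas ℓ.val
  set γ : Measure ℝ := gaussianReal 0 1 with hγ
  set ν : Measure (↥Lbar → ℝ) := P.map Z with hν
  haveI : IsProbabilityMeasure ν := Measure.isProbabilityMeasure_map hZm.aemeasurable
  -- independence of X and Z
  have hXZ : IndepFun X Z P := by
    have hdisj01 : Disjoint ({⟨0, h0S⟩} : Finset ↥S)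
        (Finset.univ.filter (fun i : ↥S => i.val ≠ 0)) := by
      simp [Finset.disjoint_left]
    have h := hindep.indepFun_finset ({⟨0, h0S⟩} : Finset ↥S)
      (Finset.univ.filter (fun i : ↥S => i.val ≠ 0)) hdisj01 (fun i => hΥmeas i.val)
    have g1m : Measurable (fun f : (↥({⟨0, h0S⟩} : Finset ↥S)) → ℝ =>
        f ⟨⟨0, h0S⟩, Finset.mem_singleton_self _⟩) := measurable_pi_apply _
    have g2m : Measurable (fun f : (↥(Finset.univ.filter (fun i : ↥S => i.val ≠ 0))) → ℝ =>
        (fun ℓ : ↥Lbar => f ⟨⟨ℓ.val, hLbarS ℓ.prop⟩,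
          Finset.mem_filter.mpr ⟨Finset.mem_univ _, hLbar0 ℓ.prop⟩⟩)) :=
      measurable_pi_lambda _ fun ℓ => measurable_pi_apply _
    exact h.comp g1m g2m
  have hprod : P.map (fun ω => (X ω, Z ω)) = γ.prod ν := by
    rw [hν, ← hgauss 0 h0S]
    exact (indepFun_iff_map_prod_eq_prod_map_map hXm.aemeasurable hZm.aemeasurable).mp hXZ
  -- the target set as a preimage
  set A' : Set (ℝ × (↥Lbar → ℝ)) :=
    {p | 0 < p.1 ∧ ∃ q : Fin q₀, ∀ ℓ : ↥Lbar, ℓ.val ∈ L q → dhi * p.1 - dlo * p.2 ℓ ≤ 0}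
    with hA'
  have hA'meas : MeasurableSet A' := by
    have h1 : MeasurableSet {p : ℝ × (↥Lbar → ℝ) | 0 < p.1} :=
      measurable_fst measurableSet_Ioi
    have h2 : MeasurableSet {p : ℝ × (↥Lbar → ℝ) | ∃ q : Fin q₀, ∀ ℓ : ↥Lbar,
        ℓ.val ∈ L q → dhi * p.1 - dlo * p.2 ℓ ≤ 0} := by
      rw [show {p : ℝ × (↥Lbar → ℝ) | ∃ q : Fin q₀, ∀ ℓ : ↥Lbar,
          ℓ.val ∈ L q → dhi * p.1 - dlo * p.2 ℓ ≤ 0}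
        = ⋃ q : Fin q₀, ⋂ ℓ : ↥Lbar, ⋂ (_ : ℓ.val ∈ L q),
            {p : ℝ × (↥Lbar → ℝ) | dhi * p.1 - dlo * p.2 ℓ ≤ 0} by
          ext p; simp]
      refine MeasurableSet.iUnion fun q => MeasurableSet.iInter fun ℓ =>
        MeasurableSet.iInter fun _ => ?_
      have : Measurable fun p : ℝ × (↥Lbar → ℝ) => dhi * p.1 - dlo * p.2 ℓ :=
        (measurable_fst.const_mul dhi).sub
          (by fun_prop)
      exact measurableSet_le this measurable_const
    exact h1.inter h2
  have hpre : {ω | 0 < X ω ∧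
      ∃ q : Fin q₀, ∀ l ∈ L q, dhi * X ω - dlo * Υ l ω ≤ 0}
      = (fun ω => (X ω, Z ω)) ⁻¹' A' := by
    ext ω
    simp only [Set.mem_setOf_eq, Set.mem_preimage, hA', hX, hZdef]
    refine and_congr Iff.rfl (exists_congr fun q => ?_)
    constructor
    · intro h ℓ hℓ; exact h ℓ.val hℓ
    · intro h l hl; exact h ⟨l, hmemLbar.mpr ⟨q, hl⟩⟩ hl
  -- abbreviation for the bound function
  set g : ℝ → ℝ := fun x => (1 - Phibar (κ * x) ^ (2 * m)) ^ q₀ with hg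
  have hp0 : ∀ y : ℝ, (0:ℝ) ≤ Phibar y ^ (2*m) := fun y => pow_nonneg (phibar_nonneg y) _
  have hp1 : ∀ y : ℝ, Phibar y ^ (2*m) ≤ 1 := fun y => pow_le_one₀ (phibar_nonneg y) (phibar_le_one y)
  have hg0 : ∀ x, 0 ≤ g x := fun x => pow_nonneg (by linarith [hp1 (κ*x)]) _
  have hg1 : ∀ x, g x ≤ 1 := fun x => pow_le_one₀ (by linarith [hp1 (κ*x)]) (by linarith [hp0 (κ*x)])
  have hgm : Measurable g := by
    have h1 : Measurable Phibar := phibar_anti.measurable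
    exact (((h1.comp (measurable_const_mul κ)).pow_const (2*m)).const_sub 1).pow_const q₀
  -- key pointwise bound
  have hiI : iIndep (fun i : ↥S => MeasurableSpace.comap (Υ i.val) inferInstance) P :=
    (iIndepFun_iff_iIndep _ _ _).mp hindep
  have key : ∀ x : ℝ,
      ENNReal.ofReal (1 - g x) ≤
        ν {z : ↥Lbar → ℝ | ∃ q : Fin q₀, ∀ ℓ : ↥Lbar, ℓ.val ∈ L q →
            dhi * x - dlo * z ℓ ≤ 0} := by
    intro x
    have hiff : ∀ y : ℝ, (dhi * x - dlo * y ≤ 0) ↔ κ * x ≤ y := by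
      intro y
      rw [sub_nonpos, hκ, div_mul_eq_mul_div, div_le_iff₀ hdlo, mul_comm y dlo]
    set p : ℝ := Phibar (κ * x) with hpdef
    have hpnn : 0 ≤ p := phibar_nonneg _
    have hple : p ≤ 1 := phibar_le_one _
    set E : Fin q₀ → Set Ω := fun q => ⋂ ℓ ∈ L q, Υ ℓ ⁻¹' Set.Ici (κ * x) with hE
    have hEmeas : ∀ q, MeasurableSet (E q) := fun q =>
      MeasurableSet.iInter fun ℓ => MeasurableSet.iInter fun _ =>
        hΥmeas ℓ measurableSet_Ici
    -- probability of each E q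
    have hEprob : ∀ q, P (E q) = ENNReal.ofReal (p ^ (L q).card) := by
      intro q
      set Sq : Finset ↥S := Finset.univ.filter (fun i : ↥S => i.val ∈ L q) with hSq
      have hinter : (⋂ i ∈ Sq, Υ i.val ⁻¹' Set.Ici (κ * x)) = E q := by
        ext ω
        simp only [Set.mem_iInter, Set.mem_preimage, hE, hSq, Finset.mem_filter,
          Finset.mem_univ, true_and]
        constructor
        · intro h ℓ hℓ; exact h ⟨ℓ, hLS hℓ⟩ hℓ
        · intro h i hi; exact h i.val hi
      have hcardSq : Sq.card = (L q).card := by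
        rw [← Finset.card_image_of_injective Sq Subtype.val_injective]
        congr 1
        ext ℓ
        simp only [hSq, Finset.mem_image, Finset.mem_filter, Finset.mem_univ, true_and]
        constructor
        · rintro ⟨i, hi, rfl⟩; exact hi
        · intro hℓ; exact ⟨⟨ℓ, hLS hℓ⟩, hℓ, rfl⟩
      have hmul := hindep.measure_inter_preimage_eq_mul Sq
        (sets := fun _ => Set.Ici (κ * x)) (fun i _ => measurableSet_Ici)
      have hfac : ∀ i : ↥S, P (Υ i.val ⁻¹' Set.Ici (κ * x)) = ENNReal.ofReal p := by
        intro i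
        rw [← Measure.map_apply (hΥmeas i.val) measurableSet_Ici, hgauss i.val i.prop,
          hγ, gaussian_Ici]
      calc P (E q) = P (⋂ i ∈ Sq, Υ i.val ⁻¹' Set.Ici (κ * x)) := by rw [hinter]
        _ = ∏ i ∈ Sq, P (Υ i.val ⁻¹' Set.Ici (κ * x)) := hmul
        _ = ∏ _i ∈ Sq, ENNReal.ofReal p := Finset.prod_congr rfl fun i _ => hfac i
        _ = (ENNReal.ofReal p) ^ Sq.card := Finset.prod_const _
        _ = ENNReal.ofReal (p ^ (L q).card) := by
            rw [hcardSq, ENNReal.ofReal_pow hpnn]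
    -- independence of the groups: product formula for intersection of complements
    have hprodind : ∀ F : Finset (Fin q₀),
        P (⋂ q ∈ F, (E q)ᶜ) = ∏ q ∈ F, (1 - P (E q)) := by
      intro F
      induction F using Finset.induction_on with
      | empty => simp
      | insert a F' haF ih =>
        rw [Finset.set_biInter_insert, Finset.prod_insert haF, ← ih]
        have hIndep : Indep
            (⨆ i ∈ {i : ↥S | i.val ∈ L a},
              MeasurableSpace.comap (Υ i.val) inferInstance)
            (⨆ i ∈ {i : ↥S | ∃ q ∈ F', i.val ∈ L q},
              MeasurableSpace.comap (Υ i.val) inferInstance) P := by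
          refine indep_iSup_of_disjoint
            (m := fun i : ↥S => MeasurableSpace.comap (Υ i.val) inferInstance)
            (fun i => (hΥmeas i.val).comap_le) hiI ?_
          rw [Set.disjoint_left]
          rintro i hi hi2
          simp only [Set.mem_setOf_eq] at hi hi2
          obtain ⟨q, hqF, hiq⟩ := hi2
          have hne : q ≠ a := by rintro rfl; exact haF hqF
          exact Finset.disjoint_left.mp (hdisj a q (Ne.symm hne)) hi hiq
        have hm1 : MeasurableSet[⨆ i ∈ {i : ↥S | i.val ∈ L a},
            MeasurableSpace.comap (Υ i.val) inferInstance] ((E a)ᶜ) := by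
          refine MeasurableSet.compl ?_
          refine MeasurableSet.iInter fun ℓ => MeasurableSet.iInter fun hℓ => ?_
          have hle : MeasurableSpace.comap (Υ ℓ) inferInstance ≤
              ⨆ i ∈ {i : ↥S | i.val ∈ L a},
                MeasurableSpace.comap (Υ i.val) inferInstance :=
            le_iSup₂ (f := fun (i : ↥S) (_ : i ∈ {i : ↥S | i.val ∈ L a}) =>
              MeasurableSpace.comap (Υ i.val) inferInstance) ⟨ℓ, hLS hℓ⟩ hℓ
          exact hle _ ⟨Set.Ici (κ * x), measurableSet_Ici, rfl⟩
        have hm2 : MeasurableSet[⨆ i ∈ {i : ↥S | ∃ q ∈ F', i.val ∈ L q},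
            MeasurableSpace.comap (Υ i.val) inferInstance] (⋂ q ∈ F', (E q)ᶜ) := by
          refine MeasurableSet.iInter fun q => MeasurableSet.iInter fun hq => ?_
          refine MeasurableSet.compl ?_
          refine MeasurableSet.iInter fun ℓ => MeasurableSet.iInter fun hℓ => ?_
          have hle : MeasurableSpace.comap (Υ ℓ) inferInstance ≤
              ⨆ i ∈ {i : ↥S | ∃ q ∈ F', i.val ∈ L q},
                MeasurableSpace.comap (Υ i.val) inferInstance :=
            le_iSup₂ (f := fun (i : ↥S) (_ : i ∈ {i : ↥S | ∃ q ∈ F', i.val ∈ L q}) =>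
              MeasurableSpace.comap (Υ i.val) inferInstance) ⟨ℓ, hLS hℓ⟩ ⟨q, hq, hℓ⟩
          exact hle _ ⟨Set.Ici (κ * x), measurableSet_Ici, rfl⟩
        have hmul2 := (Indep_iff _ _ _).mp hIndep _ _ hm1 hm2
        rw [hmul2, prob_compl_eq_one_sub (hEmeas a)]
    -- measurability of the target set
    have hBmeas : MeasurableSet {z : ↥Lbar → ℝ | ∃ q : Fin q₀, ∀ ℓ : ↥Lbar,
        ℓ.val ∈ L q → dhi * x - dlo * z ℓ ≤ 0} := by
      rw [show {z : ↥Lbar → ℝ | ∃ q : Fin q₀, ∀ ℓ : ↥Lbar,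
          ℓ.val ∈ L q → dhi * x - dlo * z ℓ ≤ 0}
        = ⋃ q : Fin q₀, ⋂ ℓ : ↥Lbar, ⋂ (_ : ℓ.val ∈ L q),
            {z : ↥Lbar → ℝ | dhi * x - dlo * z ℓ ≤ 0} by ext z; simp]
      refine MeasurableSet.iUnion fun q => MeasurableSet.iInter fun ℓ =>
        MeasurableSet.iInter fun _ => ?_
      exact measurableSet_le
        (measurable_const.sub (by fun_prop)) measurable_const
    -- pull back
    have hpull : Z ⁻¹' {z : ↥Lbar → ℝ | ∃ q : Fin q₀, ∀ ℓ : ↥Lbar,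
        ℓ.val ∈ L q → dhi * x - dlo * z ℓ ≤ 0} = ⋃ q, E q := by
      ext ω
      simp only [Set.mem_preimage, Set.mem_setOf_eq, Set.mem_iUnion, hZdef, hE,
        Set.mem_iInter, Set.mem_preimage, Set.mem_Ici]
      refine exists_congr fun q => ?_
      constructor
      · intro h ℓ hℓ
        exact (hiff _).mp (h ⟨ℓ, hmemLbar.mpr ⟨q, hℓ⟩⟩ hℓ)
      · intro h ℓ hℓ
        exact (hiff _).mpr (h ℓ.val hℓ)
    -- product formula over univ
    have hPinter : P (⋂ q, (E q)ᶜ) =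
        ENNReal.ofReal (∏ q : Fin q₀, (1 - p ^ (L q).card)) := by
      have h1 : (⋂ q, (E q)ᶜ) = ⋂ q ∈ (Finset.univ : Finset (Fin q₀)), (E q)ᶜ := by simp
      rw [h1, hprodind Finset.univ,
        ENNReal.ofReal_prod_of_nonneg (fun q _ => by
          have := pow_le_one₀ hpnn hple (n := (L q).card); linarith)]
      refine Finset.prod_congr rfl fun q _ => ?_
      rw [hEprob q, ← ENNReal.ofReal_one,
        ← ENNReal.ofReal_sub _ (pow_nonneg hpnn _)]
    -- the real inequality
    have hreal : ∏ q : Fin q₀, (1 - p ^ (L q).card) ≤ g x := by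
      have h1 : ∀ q : Fin q₀, 1 - p ^ (L q).card ≤ 1 - p ^ (2*m) := fun q => by
        have := pow_le_pow_of_le_one hpnn hple (hcard q)
        linarith
      calc ∏ q : Fin q₀, (1 - p ^ (L q).card)
          ≤ ∏ _q : Fin q₀, (1 - p ^ (2*m)) := by
            refine Finset.prod_le_prod (fun q _ => ?_) (fun q _ => h1 q)
            have := pow_le_one₀ hpnn hple (n := (L q).card); linarith
        _ = (1 - p ^ (2*m)) ^ q₀ := by
            rw [Finset.prod_const, Finset.card_univ, Fintype.card_fin]
        _ = g x := by rw [hg]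
    -- assembly
    rw [hν, Measure.map_apply hZm hBmeas, hpull]
    have hunion : P (⋃ q, E q) = 1 - P (⋂ q, (E q)ᶜ) := by
      rw [← Set.compl_iUnion, prob_compl_eq_one_sub (MeasurableSet.iUnion hEmeas),
        ENNReal.sub_sub_cancel ENNReal.one_ne_top prob_le_one]
    rw [hunion, hPinter]
    calc ENNReal.ofReal (1 - g x) = 1 - ENNReal.ofReal (g x) := by
          rw [ENNReal.ofReal_sub _ (hg0 x), ENNReal.ofReal_one]
      _ ≤ 1 - ENNReal.ofReal (∏ q : Fin q₀, (1 - p ^ (L q).card)) :=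
          tsub_le_tsub_left (ENNReal.ofReal_le_ofReal hreal) 1
  -- putting everything together
  have hPA : P ((fun ω => (X ω, Z ω)) ⁻¹' A') = ∫⁻ x, ν (Prod.mk x ⁻¹' A') ∂γ := by
    rw [← Measure.map_apply (hXm.prodMk hZm) hA'meas, hprod, Measure.prod_apply hA'meas]
  have hsec : ∀ x : ℝ, Prod.mk x ⁻¹' A' =
      if 0 < x then {z : ↥Lbar → ℝ | ∃ q : Fin q₀, ∀ ℓ : ↥Lbar, ℓ.val ∈ L q →
          dhi * x - dlo * z ℓ ≤ 0} else ∅ := by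
    intro x
    split_ifs with hx
    · ext z; simp [hA', hx]
    · ext z; simp [hA', hx]
  have hlow : ∫⁻ x in Set.Ioi (0:ℝ), ENNReal.ofReal (1 - g x) ∂γ ≤
      ∫⁻ x, ν (Prod.mk x ⁻¹' A') ∂γ := by
    rw [← lintegral_indicator measurableSet_Ioi]
    refine lintegral_mono fun x => ?_
    rw [hsec x]
    by_cases hx : 0 < x
    · rw [Set.indicator_of_mem (Set.mem_Ioi.mpr hx), if_pos hx]; exact key x
    · rw [Set.indicator_of_notMem (by simpa using hx), if_neg hx]; exact zero_le
  have hfinal : ∫⁻ x in Set.Ioi (0:ℝ), ENNReal.ofReal (1 - g x) ∂γ =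
      ENNReal.ofReal (1 / 2 - ∫ x in Set.Ioi (0:ℝ), g x *
        (Real.exp (-x ^ 2 / 2) / Real.sqrt (2 * Real.pi))) := by
    have hφm : Measurable (fun x : ℝ => Real.exp (-x ^ 2 / 2) / Real.sqrt (2 * Real.pi)) :=
      ((measurable_id.pow_const 2).neg.div_const 2).exp.div_const _
    have hprodm : Measurable (fun x : ℝ => g x * (Real.exp (-x ^ 2 / 2) / Real.sqrt (2 * Real.pi))) :=
      hgm.mul hφm
    have hφint : IntegrableOn
        (fun x : ℝ => g x * (Real.exp (-x ^ 2 / 2) / Real.sqrt (2 * Real.pi))) (Set.Ioi 0)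
        volume := by
      refine Integrable.mono' integrable_phi.restrict hprodm.aestronglyMeasurable ?_
      filter_upwards with x
      have h1 : (0:ℝ) ≤ Real.exp (-x ^ 2 / 2) / Real.sqrt (2 * Real.pi) := by positivity
      rw [Real.norm_eq_abs, abs_of_nonneg (mul_nonneg (hg0 x) h1)]
      nlinarith [hg0 x, hg1 x]
    have hI0 : (0:ℝ) ≤ ∫ x in Set.Ioi (0:ℝ), g x * (Real.exp (-x ^ 2 / 2) / Real.sqrt (2 * Real.pi)) := by
      refine MeasureTheory.setIntegral_nonneg measurableSet_Ioi fun x _ => ?_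
      have h1 : (0:ℝ) ≤ Real.exp (-x ^ 2 / 2) / Real.sqrt (2 * Real.pi) := by positivity
      exact mul_nonneg (hg0 x) h1
    have hIoi : γ (Set.Ioi (0:ℝ)) = ENNReal.ofReal (1/2) := by
      rw [hγ, gaussian_Ioi, phibar_zero]
    have e1 : ∀ x : ℝ, ENNReal.ofReal (1 - g x) = 1 - ENNReal.ofReal (g x) := fun x => by
      rw [ENNReal.ofReal_sub _ (hg0 x), ENNReal.ofReal_one]
    simp_rw [e1]
    have hfin : (∫⁻ x in Set.Ioi (0:ℝ), ENNReal.ofReal (g x) ∂γ) ≠ ⊤ := by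
      refine ne_of_lt (lt_of_le_of_lt
        (lintegral_mono (fun x => ENNReal.ofReal_le_one.mpr (hg1 x))) ?_)
      rw [MeasureTheory.setLIntegral_one]
      exact lt_of_le_of_lt prob_le_one ENNReal.one_lt_top
    have hle : Filter.EventuallyLE (ae (γ.restrict (Set.Ioi 0)))
        (fun x => ENNReal.ofReal (g x)) (fun _ => (1:ENNReal)) :=
      Filter.Eventually.of_forall fun x => ENNReal.ofReal_le_one.mpr (hg1 x)
    rw [lintegral_sub hgm.ennreal_ofReal hfin hle, MeasureTheory.setLIntegral_one, hIoi]
    have e2 : ∫⁻ x in Set.Ioi (0:ℝ), ENNReal.ofReal (g x) ∂γ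
        = ENNReal.ofReal (∫ x in Set.Ioi (0:ℝ),
            g x * (Real.exp (-x ^ 2 / 2) / Real.sqrt (2 * Real.pi))) := by
      rw [hγ, gaussianReal_of_var_ne_zero 0 one_ne_zero,
        MeasureTheory.restrict_withDensity measurableSet_Ioi,
        lintegral_withDensity_eq_lintegral_mul _ (measurable_gaussianPDF 0 1)
          hgm.ennreal_ofReal]
      have hpos : 0 ≤ᵐ[volume.restrict (Set.Ioi (0:ℝ))]
          (fun x => g x * (Real.exp (-x ^ 2 / 2) / Real.sqrt (2 * Real.pi))) := by
        filter_upwards with x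
        have h1 : (0:ℝ) ≤ Real.exp (-x ^ 2 / 2) / Real.sqrt (2 * Real.pi) := by positivity
        exact mul_nonneg (hg0 x) h1
      rw [ofReal_integral_eq_lintegral_ofReal hφint hpos]
      refine lintegral_congr fun x => ?_
      simp only [Pi.mul_apply, gaussianPDF, pdf_eq]
      rw [← ENNReal.ofReal_mul (by positivity), mul_comm]
    rw [e2, ← ENNReal.ofReal_sub _ hI0]
  calc ENNReal.ofReal
        (1 / 2 - ∫ x in Set.Ioi (0 : ℝ),
          (1 - Phibar (κ * x) ^ (2 * m)) ^ q₀ *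
            (Real.exp (-x ^ 2 / 2) / Real.sqrt (2 * Real.pi)))
      = ∫⁻ x in Set.Ioi (0:ℝ), ENNReal.ofReal (1 - g x) ∂γ := hfinal.symm
    _ ≤ ∫⁻ x, ν (Prod.mk x ⁻¹' A') ∂γ := hlow
    _ = P ((fun ω => (X ω, Z ω)) ⁻¹' A') := hPA.symm
    _ = _ := by rw [← hpre]
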